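/- arXiv:1805.06204 — 5 statements merged into one kernel-verified Lean document; each statement's English description precedes it below -/
import Mathlib

section
/- Let 0 < q < 1 and let f : (0,∞) → ℝ be a nonnegative function with (1-q)∑_{j∈ℤ} f(q^j) q^j = 1 and finite q-moments of all orders, i.e., ∑_{j∈ℤ} q^{-jk} f(q^{-j}) q^{-j} < ∞ for every k ∈ ℕ. Suppose there is C > 0 with f(q^{-j}) ≥ C q^{j(j+1)/2} for all j ≥ 0. Then there exists a function h : (0,∞) → ℝ, not identically zero on {q^j : j ∈ ℤ}, with sup_{j∈ℤ} |h(q^j)| = 1, such that ∑_{j∈ℤ} q^{-j(k+1)} f(q^{-j}) h(q^{-j}) = 0 for all k ∈ ℕ₀. -/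
open Filter Finset

noncomputable def qc (q : ℝ) : ℕ → ℝ
  | 0 => 1
  | n + 1 => -(qc q n) * q ^ n / (1 - q ^ (n + 1))

noncomputable def qw (q : ℝ) : ℕ → ℝ
  | 0 => 1
  | n + 1 => qw q n / (1 - q ^ (n + 1))

lemma qpow_lt_one {q : ℝ} (hq0 : 0 < q) (hq1 : q < 1) (n : ℕ) : q ^ (n + 1) < 1 :=
  pow_lt_one₀ hq0.le hq1 (Nat.succ_ne_zero n)

lemma qc_rec {q : ℝ} (hq0 : 0 < q) (hq1 : q < 1) (n : ℕ) :
    qc q (n + 1) * (1 - q ^ (n + 1)) = -(qc q n) * q ^ n := by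
  have h : (1 : ℝ) - q ^ (n + 1) ≠ 0 := by
    have := qpow_lt_one hq0 hq1 n; nlinarith
  rw [qc, div_mul_cancel₀ _ h]

lemma abs_qc_succ {q : ℝ} (hq0 : 0 < q) (hq1 : q < 1) (n : ℕ) :
    |qc q (n + 1)| = |qc q n| * q ^ n / (1 - q ^ (n + 1)) := by
  have h : (0 : ℝ) < 1 - q ^ (n + 1) := by
    have := qpow_lt_one hq0 hq1 n; linarith
  rw [qc, abs_div, abs_of_pos h, abs_mul, abs_neg, abs_pow, abs_of_pos hq0]

lemma tri_succ (n : ℕ) : (n + 1) * n / 2 = n * (n - 1) / 2 + n := by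
  cases n with
  | zero => simp
  | succ m =>
      have h1 : (m + 1 + 1) * (m + 1) = (m + 1) * m + 2 * (m + 1) := by ring
      simp only [Nat.succ_sub_one, h1, Nat.add_mul_div_left _ _ (by norm_num : 0 < 2)]

lemma abs_qc_eq {q : ℝ} (hq0 : 0 < q) (hq1 : q < 1) (n : ℕ) :
    |qc q n| = q ^ (n * (n - 1) / 2) * qw q n := by
  induction n with
  | zero => simp [qc, qw]
  | succ n ih =>
      have h : (0 : ℝ) < 1 - q ^ (n + 1) := by
        have := qpow_lt_one hq0 hq1 n; linarith
      have ht : (n + 1) * (n + 1 - 1) / 2 = n * (n - 1) / 2 + n := by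
        simpa using tri_succ n
      rw [abs_qc_succ hq0 hq1, ih, qw, ht, pow_add]
      field_simp
      ring

lemma qw_pos {q : ℝ} (hq0 : 0 < q) (hq1 : q < 1) (n : ℕ) : 0 < qw q n := by
  induction n with
  | zero => norm_num [qw]
  | succ n ih =>
      have h : (0 : ℝ) < 1 - q ^ (n + 1) := by
        have := qpow_lt_one hq0 hq1 n; linarith
      rw [qw]; positivity

lemma qw_le_exp_sum {q : ℝ} (hq0 : 0 < q) (hq1 : q < 1) (n : ℕ) :
    qw q n ≤ Real.exp ((∑ s ∈ range n, q ^ (s + 1)) / (1 - q)) := by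
  have h1q : (0 : ℝ) < 1 - q := by linarith
  induction n with
  | zero => simp [qw]
  | succ n ih =>
      have hx : (0 : ℝ) < 1 - q ^ (n + 1) := by
        have := qpow_lt_one hq0 hq1 n; linarith
      have hxq : q ^ (n + 1) ≤ q := by
        calc q ^ (n + 1) ≤ q ^ 1 := pow_le_pow_of_le_one hq0.le hq1.le (by omega)
        _ = q := pow_one q
      have hxpos : 0 < q ^ (n + 1) := pow_pos hq0 _
      have key : 1 / (1 - q ^ (n + 1)) ≤ Real.exp (q ^ (n + 1) / (1 - q)) := by
        have h2 := Real.add_one_le_exp (q ^ (n + 1) / (1 - q))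
        have h3 : 1 / (1 - q ^ (n + 1)) ≤ q ^ (n + 1) / (1 - q) + 1 := by
          rw [div_le_iff₀ hx]
          have h4 : 0 ≤ (q - q ^ (n + 1)) * q ^ (n + 1) := by nlinarith
          rw [add_mul, div_mul_eq_mul_div]
          have h5 : q ^ (n + 1) ≤ q ^ (n + 1) * (1 - q ^ (n + 1)) / (1 - q) := by
            rw [le_div_iff₀ h1q]; nlinarith
          nlinarith
        linarith
      rw [qw, sum_range_succ, add_div, Real.exp_add, div_eq_mul_one_div]
      have hwn := qw_pos hq0 hq1 n
      have := mul_le_mul ih key (by positivity) (Real.exp_nonneg _)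
      linarith

lemma qw_le {q : ℝ} (hq0 : 0 < q) (hq1 : q < 1) (n : ℕ) :
    qw q n ≤ Real.exp (q / (1 - q) / (1 - q)) := by
  have h1q : (0 : ℝ) < 1 - q := by linarith
  refine (qw_le_exp_sum hq0 hq1 n).trans (Real.exp_le_exp.mpr ?_)
  apply div_le_div_of_nonneg_right _ h1q.le
  have hg : ∑ s ∈ range n, q ^ (s + 1) = q * ((q ^ n - 1) / (q - 1)) := by
    rw [← geom_sum_eq (ne_of_lt hq1) n, mul_sum]
    exact sum_congr rfl fun s _ => pow_succ' q s
  rw [hg]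
  have hqn0 : 0 < q ^ n := pow_pos hq0 n
  have hqn1 : q ^ n ≤ 1 := pow_le_one₀ hq0.le hq1.le
  have e : (q ^ n - 1) / (q - 1) = (1 - q ^ n) / (1 - q) := by
    rw [← neg_div_neg_eq]; ring_nf
  have : (q ^ n - 1) / (q - 1) ≤ 1 / (1 - q) := by
    rw [e, div_le_div_iff₀ h1q h1q]
    nlinarith
  calc q * ((q ^ n - 1) / (q - 1)) ≤ q * (1 / (1 - q)) :=
        mul_le_mul_of_nonneg_left this hq0.le
    _ = q / (1 - q) := by ring

lemma qc_summable {q : ℝ} (hq0 : 0 < q) (hq1 : q < 1) (z : ℝ) :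
    Summable (fun n : ℕ => qc q n * z ^ n) := by
  have h1q : (0 : ℝ) < 1 - q := by linarith
  apply summable_of_ratio_norm_eventually_le (r := 1/2) (by norm_num)
  have h0 : Tendsto (fun n : ℕ => q ^ n) atTop (nhds 0) :=
    tendsto_pow_atTop_nhds_zero_of_lt_one hq0.le hq1
  have hev : ∀ᶠ n : ℕ in atTop, q ^ n < (1 - q) / (2 * (|z| + 1)) :=
    h0.eventually (gt_mem_nhds (by positivity))
  filter_upwards [hev] with n hn
  have hx : (0 : ℝ) < 1 - q ^ (n + 1) := by
    have := qpow_lt_one hq0 hq1 n; linarith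
  have hxq : q ^ (n + 1) ≤ q := by
    calc q ^ (n + 1) ≤ q ^ 1 := pow_le_pow_of_le_one hq0.le hq1.le (by omega)
    _ = q := pow_one q
  have hn' : q ^ n * (2 * (|z| + 1)) < 1 - q := by
    rw [← lt_div_iff₀ (by positivity)]; exact hn
  have key : q ^ n * |z| / (1 - q ^ (n + 1)) ≤ 1/2 := by
    rw [div_le_iff₀ hx]
    nlinarith [abs_nonneg z, pow_nonneg hq0.le n]
  rw [Real.norm_eq_abs, Real.norm_eq_abs, abs_mul, abs_mul, abs_pow, abs_pow,
    abs_qc_succ hq0 hq1]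
  have e : |qc q n| * q ^ n / (1 - q ^ (n + 1)) * |z| ^ (n + 1)
      = (|qc q n| * |z| ^ n) * (q ^ n * |z| / (1 - q ^ (n + 1))) := by
    rw [pow_succ]; ring
  rw [e, show (1:ℝ)/2 * (|qc q n| * |z| ^ n) = (|qc q n| * |z| ^ n) * (1/2) by ring]
  exact mul_le_mul_of_nonneg_left key (by positivity)

lemma qc_feq {q : ℝ} (hq0 : 0 < q) (hq1 : q < 1) (z : ℝ) :
    ∑' n : ℕ, qc q n * z ^ n = (1 - z) * ∑' n : ℕ, qc q n * (q * z) ^ n := by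
  have hs := qc_summable hq0 hq1 z
  have hs2 := qc_summable hq0 hq1 (q * z)
  have hs3 : Summable (fun n : ℕ => qc q (n + 1) * (q * z) ^ (n + 1)) :=
    (summable_nat_add_iff 1).mpr hs2
  have hs4 : Summable (fun n : ℕ => z * (qc q n * (q * z) ^ n)) := hs2.mul_left z
  have term : ∀ n : ℕ, qc q (n + 1) * z ^ (n + 1)
      = qc q (n + 1) * (q * z) ^ (n + 1) - z * (qc q n * (q * z) ^ n) := by
    intro n
    have hrec := qc_rec hq0 hq1 n
    linear_combination (z ^ (n + 1)) * hrec
  rw [Summable.tsum_eq_zero_add hs, tsum_congr term, Summable.tsum_sub hs3 hs4, tsum_mul_left,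
    Summable.tsum_eq_zero_add hs2]
  simp [qc]
  ring

lemma qc_zero {q : ℝ} (hq0 : 0 < q) (hq1 : q < 1) (k : ℕ) :
    ∑' n : ℕ, qc q n * ((q : ℝ) ^ (-(k : ℤ))) ^ n = 0 := by
  induction k with
  | zero =>
      have := qc_feq hq0 hq1 1
      simpa using this
  | succ k ih =>
      rw [qc_feq hq0 hq1]
      have harg : q * (q : ℝ) ^ (-((k : ℤ) + 1)) = (q : ℝ) ^ (-(k : ℤ)) := by
        rw [mul_comm, ← zpow_add_one₀ (ne_of_gt hq0)]
        congr 1; ring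
      push_cast
      rw [harg]
      push_cast at ih
      rw [ih, mul_zero]
/-- Existence of a q-perturbation for a q-density with heavy tail
f(q^{-j}) ≥ C q^{j(j+1)/2} (Theorem 1 of the paper). -/
theorem exists_q_perturbation (q : ℝ) (hq0 : 0 < q) (hq1 : q < 1)
    (f : ℝ → ℝ) (hf : ∀ t > 0, 0 ≤ f t)
    (hnorm : (1 - q) * ∑' j : ℤ, f (q ^ j) * q ^ j = 1)
    (hmom : ∀ k : ℕ, Summable fun j : ℤ => f (q ^ (-j)) * q ^ (-j * (k + 1)))
    (C : ℝ) (hC : 0 < C)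
    (hheavy : ∀ j : ℕ, C * q ^ (j * (j + 1) / 2) ≤ f (q ^ (-(j : ℤ)))) :
    ∃ h : ℝ → ℝ, (∃ j : ℤ, h (q ^ j) ≠ 0) ∧
      (⨆ j : ℤ, |h (q ^ j)|) = 1 ∧
      ∀ k : ℕ, ∑' j : ℤ, q ^ (-j * (k + 1)) * f (q ^ (-j)) * h (q ^ (-j)) = 0 := by
  classical
  have h1q : (0 : ℝ) < 1 - q := by linarith
  have hqne : q ≠ 0 := ne_of_gt hq0
  set E : ℝ := Real.exp (q / (1 - q) / (1 - q)) with hE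
  set fn : ℕ → ℝ := fun n => f (q ^ (-(n : ℤ))) with hfn
  have hfnpos : ∀ n, 0 < fn n := fun n =>
    lt_of_lt_of_le (by positivity) (hheavy n)
  set G : ℕ → ℝ := fun n => qc q n * q ^ n / fn n with hG
  have hGbd : ∀ n, |G n| ≤ E / C := by
    intro n
    have h1 : |G n| = |qc q n| * q ^ n / fn n := by
      rw [hG]
      simp only
      rw [abs_div, abs_mul, abs_pow, abs_of_pos hq0, abs_of_pos (hfnpos n)]
    have htri : n * (n + 1) / 2 = n * (n - 1) / 2 + n := by
      rw [Nat.mul_comm n (n + 1)]; exact tri_succ n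
    have h2 : |qc q n| * q ^ n = qw q n * q ^ (n * (n + 1) / 2) := by
      rw [abs_qc_eq hq0 hq1, htri, pow_add]; ring
    have hp : (0:ℝ) < q ^ (n * (n + 1) / 2) := pow_pos hq0 _
    have hwpos := qw_pos hq0 hq1 n
    calc |G n| = qw q n * q ^ (n * (n + 1) / 2) / fn n := by rw [h1, h2]
      _ ≤ qw q n * q ^ (n * (n + 1) / 2) / (C * q ^ (n * (n + 1) / 2)) :=
          div_le_div_of_nonneg_left (by positivity) (by positivity) (hheavy n)
      _ = qw q n / C := by
          rw [mul_comm C _, ← div_div, mul_div_assoc, div_self (ne_of_gt hp)]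
          rw [mul_one]
      _ ≤ E / C := div_le_div_of_nonneg_right (qw_le hq0 hq1 n) hC.le
  set S : ℝ := ⨆ n : ℕ, |G n| with hSdef
  have hbdd : BddAbove (Set.range fun n : ℕ => |G n|) :=
    ⟨E / C, by rintro x ⟨n, rfl⟩; exact hGbd n⟩
  have hG0pos : 0 < G 0 := by
    have hG0 : G 0 = 1 / fn 0 := by rw [hG]; simp [qc]
    rw [hG0]; exact div_pos one_pos (hfnpos 0)
  have hS0 : 0 < S := by
    have h0' : (0 : ℝ) < |G 0| := abs_pos.mpr (ne_of_gt hG0pos)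
    exact lt_of_lt_of_le h0' (le_ciSup hbdd 0)
  set A : ℤ → ℝ := fun m => if m ≤ 0 then G (-m).toNat / S else 0 with hAdef
  have hAn : ∀ n : ℕ, A (-(n : ℤ)) = G n / S := by
    intro n
    rw [hAdef]
    simp only
    rw [if_pos (by omega), neg_neg, Int.toNat_natCast]
  have hAbs : ∀ m : ℤ, |A m| ≤ 1 := by
    intro m
    rw [hAdef]
    simp only
    split
    · rw [abs_div, abs_of_pos hS0, div_le_one hS0]
      exact le_ciSup hbdd _
    · simp
  have hlog : ∀ j : ℤ, Real.logb q (q ^ j) = (j : ℝ) := by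
    intro j
    have hlq : Real.log q ≠ 0 := (Real.log_neg hq0 hq1).ne
    rw [Real.logb, Real.log_zpow, mul_div_assoc, div_self hlq, mul_one]
  refine ⟨fun t => A (round (Real.logb q t)), ?_, ?_, ?_⟩
  · refine ⟨0, ?_⟩
    simp only [hlog, round_intCast]
    rw [show A 0 = G 0 / S from by simpa using hAn 0]
    exact ne_of_gt (div_pos hG0pos hS0)
  · simp only [hlog, round_intCast]
    have hbddA : BddAbove (Set.range fun j : ℤ => |A j|) :=
      ⟨1, by rintro x ⟨j, rfl⟩; exact hAbs j⟩
    refine le_antisymm (ciSup_le hAbs) ?_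
    have h2 : ∀ n : ℕ, |G n| ≤ (⨆ j : ℤ, |A j|) * S := by
      intro n
      have hGA : |A (-(n : ℤ))| = |G n| / S := by
        rw [hAn n, abs_div, abs_of_pos hS0]
      calc |G n| = |G n| / S * S := (div_mul_cancel₀ _ (ne_of_gt hS0)).symm
        _ = |A (-(n : ℤ))| * S := by rw [hGA]
        _ ≤ (⨆ j : ℤ, |A j|) * S :=
            mul_le_mul_of_nonneg_right (le_ciSup hbddA (-(n : ℤ))) hS0.le
    have hle : S ≤ (⨆ j : ℤ, |A j|) * S := by
      rw [hSdef]; exact ciSup_le h2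
    nlinarith [hle, hS0]
  · intro k
    simp only [hlog, round_intCast]
    have hinj : Function.Injective (fun n : ℕ => (n : ℤ)) := fun a b hab =>
      Int.natCast_inj.mp hab
    have hsupp : Function.support
        (fun j : ℤ => q ^ (-j * (k + 1)) * f (q ^ (-j)) * A (-j))
        ⊆ Set.range (fun n : ℕ => (n : ℤ)) := by
      intro j hj
      rcases le_or_gt 0 j with hge | hlt
      · exact ⟨j.toNat, Int.toNat_of_nonneg hge⟩
      · exfalso
        apply hj
        have hA0 : A (-j) = 0 := by
          rw [hAdef]; simp only; rw [if_neg (by omega)]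
        show q ^ (-j * (k + 1)) * f (q ^ (-j)) * A (-j) = 0
        rw [hA0, mul_zero]
    rw [← Function.Injective.tsum_eq hinj hsupp]
    have step : ∀ n : ℕ, q ^ (-(n : ℤ) * (k + 1)) * f (q ^ (-(n : ℤ))) * A (-(n : ℤ))
        = qc q n * ((q : ℝ) ^ (-(k : ℤ))) ^ n / S := by
      intro n
      rw [hAn n]
      have hfne : fn n ≠ 0 := ne_of_gt (hfnpos n)
      have hpow : q ^ (-(n : ℤ) * ((k : ℤ) + 1)) * q ^ (n : ℕ)
          = ((q : ℝ) ^ (-(k : ℤ))) ^ (n : ℕ) := by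
        rw [← zpow_natCast q n, ← zpow_add₀ hqne,
          ← zpow_natCast ((q : ℝ) ^ (-(k : ℤ))), ← zpow_mul]
        congr 1; ring
      have key : ∀ a b c s : ℝ, b ≠ 0 → s ≠ 0 → a * b * (c / b / s) = a * c / s := by
        intro a b c s hb hs
        field_simp
      simp only [hG]
      simp only [hfn] at hfne ⊢
      rw [key _ _ _ _ hfne (ne_of_gt hS0),
        show q ^ (-(n : ℤ) * ((k : ℤ) + 1)) * (qc q n * q ^ (n : ℕ))
            = qc q n * (q ^ (-(n : ℤ) * ((k : ℤ) + 1)) * q ^ (n : ℕ)) from by ring,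
        hpow]
    calc ∑' n : ℕ, q ^ (-(n : ℤ) * (k + 1)) * f (q ^ (-(n : ℤ))) * A (-(n : ℤ))
        = ∑' n : ℕ, qc q n * ((q : ℝ) ^ (-(k : ℤ))) ^ n / S := tsum_congr step
      _ = 0 := by rw [tsum_div_const, qc_zero hq0 hq1 k, zero_div]
end

section
/- Let 0 < q < 1 and 0 < λ ≤ 1/(1-q). Then for all integers j ≥ 0, ∏_{s=1}^{j} (q^s + λ(1-q))^{-1} ≥ ∏_{s=1}^{∞} (1 + q^s)^{-1} > 0. Consequently there is a constant C > 0 such that the q-exponential density f(t) = λ e_q(-λ t) satisfies f(q^{-j}) ≥ C q^{j(j+1)/2} for all j ≥ 0. -/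
/-!
Because `λ(1 - q) ≤ 1`, each factor `(q^s + λ(1 - q))⁻¹` dominates `(1 + q^s)⁻¹`, and the partial
products of `∏ (1 + q^s)⁻¹` decrease to a positive limit since `∑ q^s < ∞`. The q-exponential
satisfies `e_q(x) = (1 - x(1 - q))⁻¹ e_q(qx)`; peeling off `j` factors starting from `x = -λq^{-j}`
gives `e_q(-λq^{-j}) = q^{j(j+1)/2} ∏_{s=1}^{j} (q^s + λ(1 - q))⁻¹ e_q(-λ)`, so
`C = λ e_q(-λ) ∏_{s ≥ 1} (1 + q^s)⁻¹` works.
-/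

open Finset

section InvOneAdd

variable {a : ℕ → ℝ}

theorem Real.tprod_one_add_ne_zero (h0 : ∀ n, 0 ≤ a n) (hs : Summable a) :
    ∏' n, (1 + a n) ≠ 0 :=
  tprod_one_add_ne_zero_of_summable (fun n => by linarith [h0 n])
    (hs.congr fun n => (Real.norm_of_nonneg (h0 n)).symm)

theorem Real.multipliable_inv_one_add (h0 : ∀ n, 0 ≤ a n) (hs : Summable a) :
    Multipliable fun n => (1 + a n)⁻¹ :=
  (Real.multipliable_one_add_of_summable hs).inv₀ (Real.tprod_one_add_ne_zero h0 hs)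

theorem Real.tprod_inv_one_add_pos (h0 : ∀ n, 0 ≤ a n) (hs : Summable a) :
    0 < ∏' n, (1 + a n)⁻¹ := by
  rw [(Real.multipliable_one_add_of_summable hs).tprod_inv₀ (Real.tprod_one_add_ne_zero h0 hs),
    inv_pos]
  exact (tprod_nonneg fun n => by linarith [h0 n]).lt_of_ne
    (Real.tprod_one_add_ne_zero h0 hs).symm

end InvOneAdd

theorem Real.tprod_le_prod_range_of_le_one {f : ℕ → ℝ} (hf : Multipliable f)
    (h0 : ∀ n, 0 ≤ f n) (h1 : ∀ n, f n ≤ 1) (j : ℕ) : ∏' n, f n ≤ ∏ n ∈ range j, f n := by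
  refine Antitone.le_of_tendsto (antitone_nat_of_succ_le fun n => ?_)
    hf.hasProd.tendsto_prod_nat j
  rw [prod_range_succ]
  exact mul_le_of_le_one_right (prod_nonneg fun i _ => h0 i) (h1 n)

noncomputable def qExp (q x : ℝ) : ℝ := ∏' s : ℕ, (1 - x * (1 - q) * q ^ s)⁻¹

section QExp

variable {q : ℝ}

theorem neg_mul_geometric_nonneg (hq0 : 0 ≤ q) (hq1 : q < 1) {x : ℝ} (hx : x ≤ 0) (s : ℕ) :
    0 ≤ -x * (1 - q) * q ^ s :=
  mul_nonneg (mul_nonneg (neg_nonneg.2 hx) (sub_nonneg.2 hq1.le)) (pow_nonneg hq0 s)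

theorem summable_neg_mul_geometric (hq0 : 0 ≤ q) (hq1 : q < 1) (x : ℝ) :
    Summable fun s : ℕ => -x * (1 - q) * q ^ s :=
  (summable_geometric_of_lt_one hq0 hq1).mul_left _

theorem qExp_pos (hq0 : 0 ≤ q) (hq1 : q < 1) {x : ℝ} (hx : x ≤ 0) : 0 < qExp q x := by
  have h := Real.tprod_inv_one_add_pos (neg_mul_geometric_nonneg hq0 hq1 hx)
    (summable_neg_mul_geometric hq0 hq1 x)
  simpa only [qExp, neg_mul, ← sub_eq_add_neg] using h

theorem qExp_eq_inv_mul_qExp_mul (hq0 : 0 ≤ q) (hq1 : q < 1) {x : ℝ} (hx : x ≤ 0) :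
    qExp q x = (1 - x * (1 - q))⁻¹ * qExp q (q * x) := by
  have hmul := Real.multipliable_inv_one_add
    (neg_mul_geometric_nonneg hq0 hq1 (mul_nonpos_of_nonneg_of_nonpos hq0 hx))
    (summable_neg_mul_geometric hq0 hq1 (q * x))
  unfold qExp
  rw [tprod_eq_zero_mul' ?_]
  · simp only [pow_zero, mul_one, pow_succ]
    congr 2
    funext s
    ring
  · convert hmul using 2 with s
    ring

theorem qExp_neg_mul_zpow_neg (hq0 : 0 < q) (hq1 : q < 1) {lam : ℝ} (hlam : 0 ≤ lam) (j : ℕ) :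
    qExp q (-(lam * q ^ (-(j : ℤ)))) =
      q ^ (j * (j + 1) / 2) * (∏ s ∈ Icc 1 j, (q ^ s + lam * (1 - q))⁻¹) * qExp q (-lam) := by
  induction j with
  | zero => simp
  | succ j ih =>
    have hx : -(lam * q ^ (-((j + 1 : ℕ) : ℤ))) ≤ 0 := neg_nonpos.2 (by positivity)
    have hshift : q * -(lam * q ^ (-((j + 1 : ℕ) : ℤ))) = -(lam * q ^ (-(j : ℤ))) := by
      simp only [zpow_neg, zpow_natCast, pow_succ]
      field_simp
    have hfactor : (1 - -(lam * q ^ (-((j + 1 : ℕ) : ℤ))) * (1 - q))⁻¹ =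
        q ^ (j + 1) * (q ^ (j + 1) + lam * (1 - q))⁻¹ := by
      have : 0 < q ^ (j + 1) := by positivity
      rw [zpow_neg, zpow_natCast]
      field_simp
      ring
    have hexp : (j + 1) * (j + 1 + 1) / 2 = j * (j + 1) / 2 + (j + 1) := by
      rw [show (j + 1) * (j + 1 + 1) = j * (j + 1) + (j + 1) * 2 by ring,
        Nat.add_mul_div_right _ _ two_pos]
    rw [qExp_eq_inv_mul_qExp_mul hq0.le hq1 hx, hshift, ih, hfactor, hexp,
      prod_Icc_succ_top (by omega), pow_add]
    ring

theorem tprod_inv_one_add_pow_succ_le_prod_Icc (hq0 : 0 < q) (hq1 : q < 1) {a : ℝ} (ha0 : 0 ≤ a)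
    (ha1 : a ≤ 1) (j : ℕ) :
    ∏' s : ℕ, (1 + q ^ (s + 1))⁻¹ ≤ ∏ s ∈ Icc 1 j, (q ^ s + a)⁻¹ := by
  have hgeom : Summable fun s : ℕ => q ^ (s + 1) :=
    (summable_nat_add_iff 1).2 (summable_geometric_of_lt_one hq0.le hq1)
  refine (Real.tprod_le_prod_range_of_le_one
    (Real.multipliable_inv_one_add (fun s => by positivity) hgeom) (fun s => by positivity)
    (fun s => inv_le_one_of_one_le₀ (le_add_of_nonneg_right (by positivity))) j).trans ?_
  rw [← Ico_add_one_right_eq_Icc, prod_Ico_eq_prod_range, Nat.add_sub_cancel]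
  refine prod_le_prod (fun s _ => inv_nonneg.2 (by positivity)) fun s _ => ?_
  rw [add_comm 1 s]
  exact inv_anti₀ (by positivity) (by linarith)

end QExp

/-- For 0 < λ ≤ 1/(1-q) the q-exponential density has heavy tail:
A_j ≥ ∏_{s=1}^∞ (1+q^s)⁻¹ > 0, hence f(q^{-j}) ≥ C q^{j(j+1)/2}. -/
theorem q_exponential_heavy_tail (q : ℝ) (hq0 : 0 < q) (hq1 : q < 1)
    (lam : ℝ) (hlam0 : 0 < lam) (hlam : lam ≤ 1 / (1 - q)) :
    (∀ j : ℕ, (∏' s : ℕ, (1 + q ^ (s + 1))⁻¹) ≤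
        ∏ s ∈ Finset.Icc 1 j, (q ^ s + lam * (1 - q))⁻¹) ∧
    0 < ∏' s : ℕ, (1 + q ^ (s + 1))⁻¹ ∧
    ∃ C > 0, ∀ j : ℕ,
      C * q ^ (j * (j + 1) / 2) ≤
        lam * ∏' s : ℕ, (1 + lam * q ^ (-(j : ℤ)) * (1 - q) * q ^ s)⁻¹ := by
  have hA := tprod_inv_one_add_pow_succ_le_prod_Icc hq0 hq1
    (mul_pos hlam0 (sub_pos.2 hq1)).le ((le_div_iff₀ (sub_pos.2 hq1)).1 hlam)
  have hP : 0 < ∏' s : ℕ, (1 + q ^ (s + 1))⁻¹ :=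
    Real.tprod_inv_one_add_pos (fun s => by positivity)
      ((summable_nat_add_iff 1).2 (summable_geometric_of_lt_one hq0.le hq1))
  have hE := qExp_pos hq0.le hq1 (neg_nonpos.2 hlam0.le)
  refine ⟨hA, hP, lam * (∏' s : ℕ, (1 + q ^ (s + 1))⁻¹) * qExp q (-lam),
    by positivity, fun j => ?_⟩
  have hdensity : ∏' s : ℕ, (1 + lam * q ^ (-(j : ℤ)) * (1 - q) * q ^ s)⁻¹ =
      qExp q (-(lam * q ^ (-(j : ℤ)))) := by
    unfold qExp
    congr 1
    funext s
    ring
  rw [hdensity, qExp_neg_mul_zpow_neg hq0 hq1 hlam0.le]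
  calc lam * (∏' s : ℕ, (1 + q ^ (s + 1))⁻¹) * qExp q (-lam) * q ^ (j * (j + 1) / 2)
      ≤ lam * (∏ s ∈ Icc 1 j, (q ^ s + lam * (1 - q))⁻¹) * qExp q (-lam) *
          q ^ (j * (j + 1) / 2) := by
        gcongr
        exact hA j
    _ = _ := by ring
end

section
/- Let 0 < q < 1 and let (c_j)_{j∈ℤ} be complex numbers such that φ(z) = ∑_{j∈ℤ} c_j z^j converges for all z ≠ 0 and c_j = o(q^{j(j+1)/2}) as j → +∞. Let φ̄(z) = ∏_{s=1}^∞ (1 - q^s z). Then M(r;φ) = o(M(r;φ̄)) as r → ∞, where M(r;g) = max_{|z|=r} |g(z)|. -/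
/-!
On `|z| = r ≥ 0` the canonical product `φ̄` has maximum modulus
`φ̄(-r) = ∏_{s ≥ 1} (1 + q^s r)`, attained at `z = -r`. Expanding this product, it dominates
`∑_j q^{j(j+1)/2} r^j`, since `q^{j(j+1)/2} r^j = ∏_{s ≤ j} q^s r`; in particular every power
`r^n` is `o(φ̄(-r))`. On `|z| = r ≥ 1` the negative powers of the Laurent series of `φ`
contribute at most `∑_{j<0} |c_j|`, the finitely many `c_j` with `0 ≤ j < J` a polynomial in `r`,
and once `|c_j| ≤ ε q^{j(j+1)/2}` for `j ≥ J` the remaining tail at most `ε φ̄(-r)`.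
-/

open Filter Finset Asymptotics

theorem prod_le_tprod_of_one_le {ι : Type*} {f : ι → ℝ} (hf1 : ∀ i, 1 ≤ f i)
    (hf : Multipliable f) (s : Finset ι) : ∏ i ∈ s, f i ≤ ∏' i, f i :=
  (prod_mono_set_of_one_le hf1).ge_of_tendsto hf.hasProd s

theorem sum_range_succ_prod_le_prod_one_add {a : ℕ → ℝ} (ha : ∀ s, 0 ≤ a s) (N : ℕ) :
    ∑ j ∈ range (N + 1), ∏ s ∈ range j, a s ≤ ∏ s ∈ range N, (1 + a s) := by
  induction N with
  | zero => simp
  | succ N ih =>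
    have hprod : ∏ s ∈ range N, a s ≤ ∏ s ∈ range N, (1 + a s) :=
      prod_le_prod (fun s _ => ha s) fun s _ => le_add_of_nonneg_left zero_le_one
    rw [sum_range_succ, prod_range_succ, prod_range_succ]
    nlinarith [ha N]

theorem prod_range_pow_succ_mul {M : Type*} [CommMonoid M] (q r : M) (j : ℕ) :
    ∏ s ∈ range j, q ^ (s + 1) * r = q ^ (j * (j + 1) / 2) * r ^ j := by
  have hsum : ∑ s ∈ range j, (s + 1) = j * (j + 1) / 2 := by
    have h := sum_range_id (j + 1)
    rw [sum_range_succ'] at h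
    simpa [mul_comm] using h
  rw [prod_mul_distrib, prod_pow_eq_pow_sum, hsum, prod_const, card_range]

theorem summable_pow_succ_mul {R : Type*} [NormedRing R] [HasSummableGeomSeries R] {x : R}
    (hx : ‖x‖ < 1) (y : R) : Summable fun s : ℕ => x ^ (s + 1) * y := by
  simpa [pow_succ'] using ((summable_geometric_of_norm_lt_one hx).mul_left x).mul_right y

theorem isLittleO_of_forall_le_add {α : Type*} {l : Filter α} {f g : α → ℝ}
    (hf : ∀ᶠ x in l, 0 ≤ f x)
    (h : ∀ ε > 0, ∃ e : α → ℝ, e =o[l] g ∧ ∀ᶠ x in l, f x ≤ e x + ε * ‖g x‖) : f =o[l] g := by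
  refine isLittleO_iff.2 fun C hC => ?_
  obtain ⟨e, he, hfe⟩ := h (C / 2) (half_pos hC)
  filter_upwards [hf, hfe, he.bound (half_pos hC)] with x hfx hfex hex
  rw [Real.norm_of_nonneg hfx]
  linarith [Real.le_norm_self (e x)]

theorem tsum_le_sum_range_add_tsum {a b : ℕ → ℝ} (ha : Summable a) (hb : Summable b)
    (hb0 : ∀ n, 0 ≤ b n) {J : ℕ} (hab : ∀ n ≥ J, a n ≤ b n) :
    ∑' n, a n ≤ ∑ n ∈ range J, a n + ∑' n, b n := by
  have htail : ∑' n, a (n + J) ≤ ∑' n, b (n + J) :=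
    ((summable_nat_add_iff J).2 ha).tsum_le_tsum (fun n => hab _ (Nat.le_add_left J n))
      ((summable_nat_add_iff J).2 hb)
  have hhead : 0 ≤ ∑ n ∈ range J, b n := sum_nonneg fun n _ => hb0 n
  rw [← ha.sum_add_tsum_nat_add J, ← hb.sum_add_tsum_nat_add J]
  linarith

theorem norm_tsum_zpow_le {c : ℤ → ℂ} {z : ℂ} (hc : Summable c)
    (hz : Summable fun j => c j * z ^ j) (h1z : 1 ≤ ‖z‖) {b : ℕ → ℝ} (hb : Summable b)
    (hb0 : ∀ n, 0 ≤ b n) {J : ℕ} (hcb : ∀ n ≥ J, ‖c n‖ * ‖z‖ ^ n ≤ b n) :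
    ‖∑' j, c j * z ^ j‖ ≤
      ∑' n : ℕ, ‖c (-(n + 1))‖ + (∑ n ∈ range J, ‖c n‖ * ‖z‖ ^ n + ∑' n, b n) := by
  have hnorm (j : ℤ) : ‖c j * z ^ j‖ = ‖c j‖ * ‖z‖ ^ j := by rw [norm_mul, norm_zpow]
  have hzn : Summable fun j => ‖c j‖ * ‖z‖ ^ j := (summable_norm_iff.2 hz).congr hnorm
  have hpos : Summable fun n : ℕ => ‖c n‖ * ‖z‖ ^ (n : ℤ) :=
    hzn.comp_injective Nat.cast_injective
  have hneg : Summable fun n : ℕ => ‖c (-(n + 1))‖ * ‖z‖ ^ (-(n + 1 : ℤ)) :=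
    hzn.comp_injective fun m n h => by simpa using h
  have hneg_le : ∑' n : ℕ, ‖c (-(n + 1))‖ * ‖z‖ ^ (-(n + 1 : ℤ)) ≤ ∑' n : ℕ, ‖c (-(n + 1))‖ :=
    hneg.tsum_le_tsum (fun n => mul_le_of_le_one_right (norm_nonneg _)
      (zpow_le_one_of_nonpos₀ h1z (by omega)))
      (hc.norm.comp_injective fun m n h => by simpa using h)
  have hsplit := tsum_of_nat_of_neg_add_one (f := fun j => ‖c j‖ * ‖z‖ ^ j) hpos hneg
  simp only [zpow_natCast] at hsplit hpos
  calc ‖∑' j, c j * z ^ j‖ ≤ ∑' j, ‖c j * z ^ j‖ := norm_tsum_le_tsum_norm (summable_norm_iff.2 hz)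
    _ = ∑' j, ‖c j‖ * ‖z‖ ^ j := tsum_congr hnorm
    _ = _ := hsplit
    _ ≤ _ := add_le_add (tsum_le_sum_range_add_tsum hpos hb hb0 hcb) hneg_le
    _ = _ := add_comm _ _

/-- `(-q r; q)_∞ = φ̄(-r)`, which is `M(r; φ̄)` for `r ≥ 0`. -/
noncomputable def qPochhammerNeg (q r : ℝ) : ℝ := ∏' s : ℕ, (1 + q ^ (s + 1) * r)

section qPochhammerNeg

variable {q : ℝ}

theorem qPochhammerNeg_nonneg (hq0 : 0 ≤ q) {r : ℝ} (hr : 0 ≤ r) : 0 ≤ qPochhammerNeg q r :=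
  tprod_nonneg fun s => by positivity

theorem multipliable_one_add_pow_succ_mul (hq0 : 0 ≤ q) (hq1 : q < 1) (r : ℝ) :
    Multipliable fun s : ℕ => 1 + q ^ (s + 1) * r :=
  Real.multipliable_one_add_of_summable
    (summable_pow_succ_mul (by rwa [Real.norm_of_nonneg hq0]) r)

theorem prod_le_qPochhammerNeg (hq0 : 0 ≤ q) (hq1 : q < 1) {r : ℝ} (hr : 0 ≤ r) (s : Finset ℕ) :
    ∏ i ∈ s, (1 + q ^ (i + 1) * r) ≤ qPochhammerNeg q r :=
  prod_le_tprod_of_one_le (fun i => le_add_of_nonneg_right (by positivity))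
    (multipliable_one_add_pow_succ_mul hq0 hq1 r) s

theorem sum_range_pow_mul_pow_le_qPochhammerNeg (hq0 : 0 ≤ q) (hq1 : q < 1) {r : ℝ} (hr : 0 ≤ r)
    (n : ℕ) : ∑ j ∈ range n, q ^ (j * (j + 1) / 2) * r ^ j ≤ qPochhammerNeg q r := by
  rcases n with _ | N
  · exact qPochhammerNeg_nonneg hq0 hr
  simp_rw [← prod_range_pow_succ_mul]
  exact (sum_range_succ_prod_le_prod_one_add (fun s => by positivity) N).trans
    (prod_le_qPochhammerNeg hq0 hq1 hr _)

theorem summable_pow_mul_pow (hq0 : 0 ≤ q) (hq1 : q < 1) {r : ℝ} (hr : 0 ≤ r) :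
    Summable fun j : ℕ => q ^ (j * (j + 1) / 2) * r ^ j :=
  summable_of_sum_range_le (fun j => by positivity)
    (sum_range_pow_mul_pow_le_qPochhammerNeg hq0 hq1 hr)

theorem tsum_pow_mul_pow_le_qPochhammerNeg (hq0 : 0 ≤ q) (hq1 : q < 1) {r : ℝ} (hr : 0 ≤ r) :
    ∑' j : ℕ, q ^ (j * (j + 1) / 2) * r ^ j ≤ qPochhammerNeg q r :=
  Real.tsum_le_of_sum_range_le (fun j => by positivity)
    (sum_range_pow_mul_pow_le_qPochhammerNeg hq0 hq1 hr)

theorem norm_tprod_one_sub_pow_succ_mul_le (hq0 : 0 ≤ q) (hq1 : q < 1) (z : ℂ) :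
    ‖∏' s : ℕ, (1 - (q : ℂ) ^ (s + 1) * z)‖ ≤ qPochhammerNeg q ‖z‖ := by
  have hq : ‖(q : ℂ)‖ < 1 := by rwa [Complex.norm_real, Real.norm_of_nonneg hq0]
  have hmul : Multipliable fun s : ℕ => 1 - (q : ℂ) ^ (s + 1) * z := by
    simpa [sub_eq_add_neg] using
      Complex.multipliable_one_add_of_summable (summable_pow_succ_mul hq (-z))
  rw [hmul.norm_tprod]
  refine hmul.norm.tprod_le_of_prod_le fun s =>
    le_trans ?_ (prod_le_qPochhammerNeg hq0 hq1 (norm_nonneg z) s)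
  refine prod_le_prod (fun i _ => norm_nonneg _) fun i _ => (norm_sub_le _ _).trans_eq ?_
  simp [Real.norm_of_nonneg hq0]

theorem norm_tprod_one_sub_pow_succ_mul_neg (hq0 : 0 ≤ q) (hq1 : q < 1) {r : ℝ} (hr : 0 ≤ r) :
    ‖∏' s : ℕ, (1 - (q : ℂ) ^ (s + 1) * (-r : ℂ))‖ = qPochhammerNeg q r := by
  have h := (multipliable_one_add_pow_succ_mul hq0 hq1 r).map_tprod Complex.ofRealHom
    Complex.continuous_ofReal
  simp only [Complex.ofRealHom_eq_coe, Complex.ofReal_add, Complex.ofReal_one,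
    Complex.ofReal_mul, Complex.ofReal_pow] at h
  simp_rw [mul_neg, sub_neg_eq_add, ← h, Complex.norm_real]
  exact Real.norm_of_nonneg (qPochhammerNeg_nonneg hq0 hr)

theorem sSup_norm_tprod_one_sub_pow_succ_mul_sphere (hq0 : 0 ≤ q) (hq1 : q < 1) {r : ℝ}
    (hr : 0 ≤ r) :
    sSup ((fun z : ℂ => ‖∏' s : ℕ, (1 - (q : ℂ) ^ (s + 1) * z)‖) '' Metric.sphere 0 r) =
      qPochhammerNeg q r := by
  refine IsGreatest.csSup_eq ⟨⟨-r, by simp [abs_of_nonneg hr],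
    norm_tprod_one_sub_pow_succ_mul_neg hq0 hq1 hr⟩, ?_⟩
  rintro _ ⟨z, hz, rfl⟩
  rw [mem_sphere_zero_iff_norm] at hz
  exact hz ▸ norm_tprod_one_sub_pow_succ_mul_le hq0 hq1 z

theorem isLittleO_pow_qPochhammerNeg (hq0 : 0 < q) (hq1 : q < 1) (n : ℕ) :
    (fun r : ℝ => r ^ n) =o[atTop] qPochhammerNeg q := by
  set K := q ^ ((n + 1) * (n + 1 + 1) / 2)
  have hK : 0 < K := by positivity
  refine (isLittleO_pow_pow_atTop_of_lt n.lt_succ_self).trans_isBigO (IsBigO.of_bound K⁻¹ ?_)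
  filter_upwards [eventually_ge_atTop 0] with r hr
  have hterm : K * r ^ (n + 1) ≤ qPochhammerNeg q r :=
    (single_le_sum (f := fun j => q ^ (j * (j + 1) / 2) * r ^ j) (fun j _ => by positivity)
      (self_mem_range_succ (n + 1))).trans
      (sum_range_pow_mul_pow_le_qPochhammerNeg hq0.le hq1 hr _)
  rw [Real.norm_of_nonneg (by positivity), Real.norm_of_nonneg (qPochhammerNeg_nonneg hq0.le hr)]
  rw [← div_eq_inv_mul, le_div_iff₀ hK, mul_comm]
  exact hterm

theorem isLittleO_const_add_sum_pow_qPochhammerNeg (hq0 : 0 < q) (hq1 : q < 1) (A : ℝ)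
    (a : ℕ → ℝ) (J : ℕ) :
    (fun r => A + ∑ n ∈ range J, a n * r ^ n) =o[atTop] qPochhammerNeg q := by
  refine IsLittleO.add (by simpa using (isLittleO_pow_qPochhammerNeg hq0 hq1 0).const_mul_left A) ?_
  simpa [Finset.sum_fn] using IsLittleO.sum fun n (_ : n ∈ range J) =>
    (isLittleO_pow_qPochhammerNeg hq0 hq1 n).const_mul_left (a n)

end qPochhammerNeg

/-- Lemma 1: if the Laurent coefficients satisfy c_j = o(q^{j(j+1)/2}) as j → +∞,
then M(r;φ) = o(M(r;φ̄)) as r → ∞, where φ̄(z) = ∏_{s=1}^∞ (1 - q^s z). -/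
theorem max_modulus_littleO (q : ℝ) (hq0 : 0 < q) (hq1 : q < 1)
    (c : ℤ → ℂ)
    (hconv : ∀ z : ℂ, z ≠ 0 → Summable fun j : ℤ => c j * z ^ j)
    (hc : Asymptotics.IsLittleO atTop (fun j : ℕ => c (j : ℤ))
      (fun j : ℕ => (q ^ (j * (j + 1) / 2) : ℝ))) :
    Asymptotics.IsLittleO atTop
      (fun r : ℝ => sSup ((fun z : ℂ => ‖∑' j : ℤ, c j * z ^ j‖) ''
        Metric.sphere (0 : ℂ) r))
      (fun r : ℝ => sSup ((fun z : ℂ => ‖∏' s : ℕ, (1 - (q : ℂ) ^ (s + 1) * z)‖) ''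
        Metric.sphere (0 : ℂ) r)) := by
  have hc1 : Summable c := by simpa using hconv 1 one_ne_zero
  have hM : qPochhammerNeg q =ᶠ[atTop] fun r => sSup ((fun z : ℂ =>
      ‖∏' s : ℕ, (1 - (q : ℂ) ^ (s + 1) * z)‖) '' Metric.sphere (0 : ℂ) r) :=
    (eventually_ge_atTop 0).mono fun r hr =>
      (sSup_norm_tprod_one_sub_pow_succ_mul_sphere hq0.le hq1 hr).symm
  refine (isLittleO_of_forall_le_add (.of_forall fun r => Real.sSup_nonneg ?_)
    fun ε hε => ?_).congr' .rfl hM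
  · rintro _ ⟨z, -, rfl⟩
    exact norm_nonneg _
  obtain ⟨J, hJ⟩ := eventually_atTop.1 (hc.bound hε)
  refine ⟨_, isLittleO_const_add_sum_pow_qPochhammerNeg hq0 hq1
    (∑' n : ℕ, ‖c (-(n + 1))‖) (fun n => ‖c n‖) J, ?_⟩
  filter_upwards [eventually_ge_atTop 1] with r hr
  refine csSup_le ((NormedSpace.sphere_nonempty.2 (by linarith)).image _) ?_
  rintro _ ⟨z, hz, rfl⟩
  rw [mem_sphere_zero_iff_norm] at hz
  subst hz
  have hT := summable_pow_mul_pow hq0.le hq1 (norm_nonneg z)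
  have hcb (n : ℕ) (hn : n ≥ J) : ‖c n‖ * ‖z‖ ^ n ≤ ε * (q ^ (n * (n + 1) / 2) * ‖z‖ ^ n) := by
    have h := hJ n hn
    rw [Real.norm_of_nonneg (by positivity)] at h
    rw [← mul_assoc]
    exact mul_le_mul_of_nonneg_right h (by positivity)
  calc ‖∑' j, c j * z ^ j‖
      ≤ _ := norm_tsum_zpow_le hc1 (hconv z (norm_pos_iff.1 (by linarith))) hr
        (hT.mul_left ε) (fun n => by positivity) hcb
    _ ≤ _ := by
      rw [tsum_mul_left, ← add_assoc,
        Real.norm_of_nonneg (qPochhammerNeg_nonneg hq0.le (norm_nonneg z))]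
      gcongr
      exact tsum_pow_mul_pow_le_qPochhammerNeg hq0.le hq1 (norm_nonneg z)
end

section
/- Let 0 < q < 1. There exist constants C₁, C₂ > 0 and r₀ such that for all r ≥ r₀: C₁ exp{ ln²r/(2 ln(1/q)) + (ln r)/2 } ≤ ∏_{j=0}^∞ (1 + q^j r) ≤ C₂ exp{ ln²r/(2 ln(1/q)) + (ln r)/2 }. -/
/-!
Take logarithms: `log ∏' (1 + q ^ j * r) = ∑' log (1 + q ^ j * r)`, and choose `N` with
`q ^ (N + 1) * r < 1 ≤ q ^ N * r`. For `j ≤ N` the term is `log (q ^ j * r)` up to an error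
`(q ^ j * r)⁻¹`, for `j > N` it is at most `q ^ j * r`; both errors sum to geometric series
bounded by `1 / (1 - q)`. The main term `∑_{j ≤ N} (log r - j log (1/q))` is a Riemann sum of a
linear function, and exceeds `log² r / (2 log (1/q)) + log r / 2` by at most `log (1/q) / 8`.
-/

open Finset Real

lemma Real.log_one_add_le_self {y : ℝ} (hy : 0 ≤ y) : log (1 + y) ≤ y := by
  linarith [log_le_sub_one_of_pos (by linarith : 0 < 1 + y)]

lemma Real.log_one_add_le_log_add_inv {y : ℝ} (hy : 0 < y) : log (1 + y) ≤ log y + y⁻¹ := by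
  have h : 1 + y = y * (1 + y⁻¹) := by field_simp; ring
  rw [h, log_mul hy.ne' (by positivity)]
  gcongr
  exact log_one_add_le_self (by positivity)

lemma sum_range_sub_mul_bounds {x L : ℝ} (hL : 0 < L) {N : ℕ}
    (hN : N * L ≤ x) (hN' : x ≤ (N + 1) * L) :
    x ^ 2 / (2 * L) + x / 2 ≤ ∑ j ∈ range (N + 1), (x - j * L) ∧
      ∑ j ∈ range (N + 1), (x - j * L) ≤ x ^ 2 / (2 * L) + x / 2 + L / 8 := by
  have hsum : ∑ j ∈ range (N + 1), (x - j * L) = (N + 1) * x - N * (N + 1) / 2 * L := by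
    clear hN hN'
    induction N with
    | zero => simp
    | succ n ih => rw [sum_range_succ, ih]; push_cast; ring
  have hgap : ∑ j ∈ range (N + 1), (x - j * L) - (x ^ 2 / (2 * L) + x / 2) =
      (x - N * L) * ((N + 1) * L - x) / (2 * L) := by
    rw [hsum]; field_simp; ring
  -- AM-GM: the two factors are nonnegative with sum `L`
  have hprod : (x - N * L) * ((N + 1) * L - x) ≤ L ^ 2 / 4 := by
    nlinarith [sq_nonneg (2 * x - (2 * N + 1) * L)]
  constructor
  · have : 0 ≤ (x - N * L) * ((N + 1) * L - x) / (2 * L) := by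
      apply div_nonneg (mul_nonneg _ _) <;> linarith
    linarith
  · have : (x - N * L) * ((N + 1) * L - x) / (2 * L) ≤ L / 8 := by
      rw [div_le_iff₀ (by positivity)]; nlinarith
    linarith

lemma tsum_log_one_add_le {y : ℕ → ℝ} (hy : ∀ j, 0 < y j) (hs : Summable y) (n : ℕ) :
    ∑' j, log (1 + y j) ≤ ∑ j ∈ range n, (log (y j) + (y j)⁻¹) + ∑' i, y (i + n) := by
  rw [← (summable_log_one_add_of_summable hs).sum_add_tsum_nat_add n]
  gcongr with j _ i
  · exact log_one_add_le_log_add_inv (hy j)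
  · exact (summable_log_one_add_of_summable hs).comp_injective (add_left_injective n)
  · exact (summable_nat_add_iff n).2 hs
  · exact log_one_add_le_self (hy _).le

lemma sum_range_log_le_tsum_log_one_add {y : ℕ → ℝ} (hy : ∀ j, 0 < y j) (hs : Summable y)
    (n : ℕ) : ∑ j ∈ range n, log (y j) ≤ ∑' j, log (1 + y j) :=
  calc ∑ j ∈ range n, log (y j) ≤ ∑ j ∈ range n, log (1 + y j) := by
        gcongr with j
        · exact hy j
        · linarith
    _ ≤ ∑' j, log (1 + y j) :=
      (summable_log_one_add_of_summable hs).sum_le_tsum _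
        fun j _ => log_nonneg (by linarith [hy j])

section Geometric

variable {q r : ℝ}

lemma Real.log_pow_mul (hq0 : 0 < q) (hr : 0 < r) (j : ℕ) :
    log (q ^ j * r) = log r - j * log (1 / q) := by
  rw [log_mul (by positivity) hr.ne', log_pow, one_div, log_inv]
  ring

lemma sum_range_inv_pow_mul_le (hq0 : 0 < q) (hq1 : q < 1) {N : ℕ} (hN : 1 ≤ q ^ N * r) :
    ∑ j ∈ range (N + 1), (q ^ j * r)⁻¹ ≤ (1 - q)⁻¹ := by
  rw [← sum_range_reflect]
  have hgeom : ∑ k ∈ range (N + 1), q ^ k ≤ (1 - q)⁻¹ := by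
    have := geom_sum_Ico_le_of_lt_one (m := 0) (n := N + 1) hq0.le hq1
    rwa [← range_eq_Ico, pow_zero, one_div] at this
  have hr : 0 < r := pos_of_mul_pos_right (one_pos.trans_le hN) (by positivity)
  refine (sum_le_sum fun k hk => ?_).trans hgeom
  have hk : k ≤ N := Nat.lt_succ_iff.1 (mem_range.1 hk)
  have hsplit : q ^ N * r = q ^ (N + 1 - 1 - k) * r * q ^ k := by
    rw [mul_right_comm, ← pow_add]; congr 2; omega
  rw [hsplit] at hN
  rw [inv_le_iff_one_le_mul₀' (by positivity)]
  linarith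

lemma tsum_pow_add_mul_le (hq0 : 0 < q) (hq1 : q < 1) {n : ℕ} (hn : q ^ n * r ≤ 1) :
    ∑' i, q ^ (i + n) * r ≤ (1 - q)⁻¹ := by
  simp_rw [pow_add, mul_assoc]
  rw [tsum_mul_right, tsum_geometric_of_lt_one hq0.le hq1]
  exact mul_le_of_le_one_right (inv_nonneg.2 (by linarith)) hn

theorem tsum_log_one_add_pow_mul_bounds (hq0 : 0 < q) (hq1 : q < 1) (hr : 1 ≤ r) :
    log r ^ 2 / (2 * log (1 / q)) + log r / 2 ≤ ∑' j, log (1 + q ^ j * r) ∧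
      ∑' j, log (1 + q ^ j * r) ≤
        log r ^ 2 / (2 * log (1 / q)) + log r / 2 + log (1 / q) / 8 + 2 / (1 - q) := by
  have hr0 : 0 < r := one_pos.trans_le hr
  have hL : 0 < log (1 / q) := log_pos (one_lt_one_div hq0 hq1)
  obtain ⟨N, hN, hN'⟩ := exists_nat_pow_near hr (one_lt_one_div hq0 hq1)
  rw [one_div_pow, div_le_iff₀' (by positivity)] at hN
  rw [one_div_pow, lt_div_iff₀' (by positivity)] at hN'
  have hNL : N * log (1 / q) ≤ log r := by
    linarith [log_nonneg hN, log_pow_mul hq0 hr0 N]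
  have hNL' : log r ≤ (N + 1) * log (1 / q) := by
    have := log_nonpos (by positivity) hN'.le
    rw [log_pow_mul hq0 hr0] at this; push_cast at this; linarith
  have hsum : ∑ j ∈ range (N + 1), log (q ^ j * r) =
      ∑ j ∈ range (N + 1), (log r - j * log (1 / q)) :=
    sum_congr rfl fun j _ => log_pow_mul hq0 hr0 j
  obtain ⟨hlow, hupp⟩ := sum_range_sub_mul_bounds hL hNL hNL'
  have hy : ∀ j, 0 < q ^ j * r := fun j => by positivity
  have hs : Summable fun j => q ^ j * r := (summable_geometric_of_lt_one hq0.le hq1).mul_right r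
  refine ⟨hlow.trans (hsum ▸ sum_range_log_le_tsum_log_one_add hy hs _), ?_⟩
  have hsplit := tsum_log_one_add_le hy hs (N + 1)
  rw [sum_add_distrib, hsum] at hsplit
  have h1 := sum_range_inv_pow_mul_le hq0 hq1 hN
  have h2 := tsum_pow_add_mul_le hq0 hq1 hN'.le
  have h12 : 2 / (1 - q) = (1 - q)⁻¹ + (1 - q)⁻¹ := by ring
  linarith

end Geometric

/-- Two-sided asymptotic estimate for ∏_{j=0}^∞ (1 + q^j r). -/
theorem Eq_growth_estimate (q : ℝ) (hq0 : 0 < q) (hq1 : q < 1) :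
    ∃ C₁ > 0, ∃ C₂ > 0, ∃ r₀ : ℝ, ∀ r ≥ r₀,
      C₁ * Real.exp ((Real.log r) ^ 2 / (2 * Real.log (1 / q)) + Real.log r / 2) ≤
        (∏' j : ℕ, (1 + q ^ j * r)) ∧
      (∏' j : ℕ, (1 + q ^ j * r)) ≤
        C₂ * Real.exp ((Real.log r) ^ 2 / (2 * Real.log (1 / q)) + Real.log r / 2) := by
  refine ⟨1, one_pos, exp (log (1 / q) / 8 + 2 / (1 - q)), exp_pos _, 1, fun r hr => ?_⟩
  have hs : Summable fun j => q ^ j * r :=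
    (summable_geometric_of_lt_one hq0.le hq1).mul_right r
  have hprod : ∏' j, (1 + q ^ j * r) = exp (∑' j, log (1 + q ^ j * r)) :=
    (rexp_tsum_eq_tprod (fun j => by positivity) (summable_log_one_add_of_summable hs)).symm
  obtain ⟨hlow, hupp⟩ := tsum_log_one_add_pow_mul_bounds hq0 hq1 hr
  rw [hprod, one_mul, ← exp_add]
  exact ⟨exp_le_exp.2 hlow, exp_le_exp.2 (by linarith)⟩
end

section
/- Let 0 < q < 1 and let X have q-density f with f(q^{-j}) ≥ C q^{j(j+1)/2} for all j ≥ 0 (C > 0) and all q-moments finite. Then there exists a q-density g with g(q^{j}) ≠ f(q^{j}) for some j ∈ ℤ, yet ∑_{j∈ℤ} q^{j(k+1)} g(q^j) = ∑_{j∈ℤ} q^{j(k+1)} f(q^j) for all k ∈ ℕ₀. -/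
/-!
Euler's series `F(z) = ∑ aₙ zⁿ`, `aₙ = (-1)ⁿ q^(n(n-1)/2) / (q; q)ₙ`, satisfies
`F(z) = (1 - z) F(qz)`, hence vanishes at `z = q^(-k)` for every `k ≥ 0`. The signed mass `aₙ qⁿ`
placed at `q^(-n)` therefore has all q-moments `∑ₙ q^(-n(k+1)) aₙ qⁿ = F(q^(-k))` equal to zero.
Since `|aₙ| qⁿ = q^(n(n+1)/2) / (q; q)ₙ` and `(q; q)ₙ ≥ exp(-q/(1-q)²)`, the heavy tail of `f`
absorbs `ε` times this mass for `ε = C exp(-q/(1-q)²)`.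
-/

open Finset Function Filter Real

namespace QMoment

lemma tsum_mul_add_mul_of_hasSum_zero {ι : Type*} {φ u v : ι → ℝ}
    (hu : Summable fun i => φ i * u i) (hv : HasSum (fun i => φ i * v i) 0) (c : ℝ) :
    ∑' i, φ i * (u i + c * v i) = ∑' i, φ i * u i := by
  simpa [mul_add, mul_left_comm] using (hu.hasSum.add (hv.mul_left c)).tsum_eq

variable {q : ℝ}

/-- The Taylor coefficients `(-1)^n q^(n(n-1)/2) / (q; q)_n` of Euler's product `(z; q)_∞`,
given by the recursion that encodes `F(z) = (1 - z) F(qz)`. -/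
noncomputable def eulerCoeff (q : ℝ) : ℕ → ℝ
  | 0 => 1
  | n + 1 => eulerCoeff q n * (-(q ^ n) / (1 - q ^ (n + 1)))

noncomputable def eulerSeries (q z : ℝ) : ℝ := ∑' n, eulerCoeff q n * z ^ n

/-- The q-Pochhammer symbol `(q; q)_n`. -/
noncomputable def qPochhammer (q : ℝ) (n : ℕ) : ℝ := ∏ i ∈ range n, (1 - q ^ (i + 1))

section

variable (hq0 : 0 ≤ q) (hq1 : q < 1)
include hq0 hq1

lemma one_sub_pow_succ_pos (n : ℕ) : 0 < 1 - q ^ (n + 1) :=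
  sub_pos.2 (pow_lt_one₀ hq0 hq1 n.succ_ne_zero)

lemma eulerCoeff_succ_mul (n : ℕ) :
    eulerCoeff q (n + 1) * (1 - q ^ (n + 1)) = -(q ^ n) * eulerCoeff q n := by
  rw [eulerCoeff, mul_assoc, div_mul_cancel₀ _ (one_sub_pow_succ_pos hq0 hq1 n).ne']
  ring

lemma abs_eulerCoeff_mul_qPochhammer (n : ℕ) :
    |eulerCoeff q n| * qPochhammer q n = q ^ (n * (n - 1) / 2) := by
  rw [← sum_range_id]
  induction n with
  | zero => simp [eulerCoeff, qPochhammer]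
  | succ n ih =>
    have hden := one_sub_pow_succ_pos hq0 hq1 n
    rw [sum_range_succ, pow_add, ← ih, eulerCoeff, qPochhammer, prod_range_succ, ← qPochhammer,
      abs_mul, abs_div, abs_neg, abs_of_nonneg (pow_nonneg hq0 n), abs_of_pos hden]
    field_simp

lemma sum_range_pow_succ_le (n : ℕ) : ∑ i ∈ range n, q ^ (i + 1) ≤ q / (1 - q) := by
  have h := geom_sum_Ico_le_of_lt_one (m := 1) (n := n + 1) hq0 hq1
  simpa [sum_Ico_eq_sum_range, add_comm] using h

lemma exp_neg_le_qPochhammer (n : ℕ) : exp (-(q / (1 - q) ^ 2)) ≤ qPochhammer q n := by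
  have h1q : 0 < 1 - q := by linarith
  have hfactor : ∀ i : ℕ, exp (-(q ^ (i + 1) / (1 - q))) ≤ 1 - q ^ (i + 1) := by
    intro i
    have hpos := one_sub_pow_succ_pos hq0 hq1 i
    rw [← le_log_iff_exp_le hpos]
    refine le_trans ?_ (one_sub_inv_le_log_of_pos hpos)
    have hle : q ^ (i + 1) ≤ q := pow_le_of_le_one hq0 hq1.le i.succ_ne_zero
    have hinv : 1 - (1 - q ^ (i + 1))⁻¹ = -(q ^ (i + 1) / (1 - q ^ (i + 1))) := by
      field_simp
      ring
    rw [hinv, neg_le_neg_iff]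
    exact div_le_div_of_nonneg_left (pow_nonneg hq0 _) h1q (by linarith)
  calc exp (-(q / (1 - q) ^ 2))
      ≤ exp (∑ i ∈ range n, -(q ^ (i + 1) / (1 - q))) := by
        rw [exp_le_exp, sum_neg_distrib, neg_le_neg_iff, ← sum_div, sq, ← div_div]
        exact div_le_div_of_nonneg_right (sum_range_pow_succ_le hq0 hq1 n) h1q.le
    _ = ∏ i ∈ range n, exp (-(q ^ (i + 1) / (1 - q))) := exp_sum _ _
    _ ≤ qPochhammer q n := prod_le_prod (fun i _ => (exp_pos _).le) fun i _ => hfactor i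

lemma exp_mul_abs_eulerCoeff_mul_pow_le (n : ℕ) :
    exp (-(q / (1 - q) ^ 2)) * |eulerCoeff q n * q ^ n| ≤ q ^ (n * (n + 1) / 2) := by
  have hexp : q ^ (n * (n - 1) / 2) * q ^ n = q ^ (n * (n + 1) / 2) := by
    rw [← sum_range_id, ← pow_add, ← sum_range_succ, sum_range_id, Nat.add_sub_cancel, mul_comm]
  calc exp (-(q / (1 - q) ^ 2)) * |eulerCoeff q n * q ^ n|
      ≤ qPochhammer q n * |eulerCoeff q n * q ^ n| :=
        mul_le_mul_of_nonneg_right (exp_neg_le_qPochhammer hq0 hq1 n) (abs_nonneg _)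
    _ = q ^ (n * (n + 1) / 2) := by
        rw [abs_mul, abs_of_nonneg (pow_nonneg hq0 n), ← hexp,
          ← abs_eulerCoeff_mul_qPochhammer hq0 hq1 n]
        ring

lemma summable_eulerCoeff_mul_pow (z : ℝ) : Summable fun n => eulerCoeff q n * z ^ n := by
  set r : ℕ → ℝ := fun n => q ^ n * |z| / (1 - q ^ (n + 1))
  have hratio : ∀ n, ‖eulerCoeff q (n + 1) * z ^ (n + 1)‖ = r n * ‖eulerCoeff q n * z ^ n‖ := by
    intro n
    simp only [r, eulerCoeff, norm_mul, norm_pow, norm_div, norm_neg, Real.norm_eq_abs,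
      abs_of_nonneg hq0, abs_of_pos (one_sub_pow_succ_pos hq0 hq1 n)]
    ring
  have hr : Tendsto r atTop (nhds 0) := by
    have hpow := tendsto_pow_atTop_nhds_zero_of_lt_one hq0 hq1
    have hden : Tendsto (fun n => 1 - q ^ (n + 1)) atTop (nhds 1) := by
      simpa using (hpow.comp (tendsto_add_atTop_nat 1)).const_sub 1
    have h := (hpow.mul_const |z|).div hden one_ne_zero
    rwa [zero_mul, zero_div] at h
  refine summable_of_ratio_norm_eventually_le (r := 1 / 2) (by norm_num) ?_
  filter_upwards [hr.eventually_le_const (by norm_num : (0 : ℝ) < 1 / 2)] with n hn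
  rw [hratio]
  exact mul_le_mul_of_nonneg_right hn (norm_nonneg _)

lemma eulerSeries_eq_one_sub_mul (z : ℝ) :
    eulerSeries q z = (1 - z) * eulerSeries q (q * z) := by
  have hu := summable_eulerCoeff_mul_pow hq0 hq1 z
  have hv := summable_eulerCoeff_mul_pow hq0 hq1 (q * z)
  have hshift : ∀ n : ℕ,
      eulerCoeff q (n + 1) * z ^ (n + 1) - eulerCoeff q (n + 1) * (q * z) ^ (n + 1) =
        -z * (eulerCoeff q n * (q * z) ^ n) := by
    intro n
    have := eulerCoeff_succ_mul hq0 hq1 n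
    linear_combination z ^ (n + 1) * this
  have hdiff : eulerSeries q z - eulerSeries q (q * z) = -z * eulerSeries q (q * z) := by
    rw [eulerSeries, eulerSeries, ← hu.tsum_sub hv, (hu.sub hv).tsum_eq_zero_add,
      tsum_congr hshift, tsum_mul_left]
    simp
  linear_combination hdiff

end

noncomputable def onInvPowers (q : ℝ) (w : ℕ → ℝ) : ℝ → ℝ :=
  extend (fun n : ℕ => q ^ (-(n : ℤ))) w 0

/-- The paper's `f · h̃`, up to the factor `ε`. -/
noncomputable def eulerPerturbation (q : ℝ) : ℝ → ℝ :=
  onInvPowers q fun n => eulerCoeff q n * q ^ n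

section

variable (hq0 : 0 < q) (hq1 : q < 1)
include hq0 hq1

lemma eulerSeries_inv_pow_eq_zero (k : ℕ) : eulerSeries q (q ^ k)⁻¹ = 0 := by
  induction k with
  | zero => simpa using eulerSeries_eq_one_sub_mul hq0.le hq1 1
  | succ k ih =>
    have hq : q * (q ^ (k + 1))⁻¹ = (q ^ k)⁻¹ := by
      field_simp
      ring
    rw [eulerSeries_eq_one_sub_mul hq0.le hq1, hq, ih, mul_zero]

lemma injective_zpow_neg_natCast : Injective fun n : ℕ => q ^ (-(n : ℤ)) :=
  (zpow_right_injective₀ hq0 hq1.ne).comp (neg_injective.comp Nat.cast_injective)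

lemma onInvPowers_zpow_neg (w : ℕ → ℝ) (n : ℕ) : onInvPowers q w (q ^ (-(n : ℤ))) = w n :=
  (injective_zpow_neg_natCast hq0 hq1).extend_apply w 0 n

lemma hasSum_mul_onInvPowers_zpow_iff (φ : ℤ → ℝ) (w : ℕ → ℝ) (s : ℝ) :
    HasSum (fun j : ℤ => φ j * onInvPowers q w (q ^ j)) s ↔
      HasSum (fun n : ℕ => φ (-n) * w n) s := by
  rw [← (neg_injective.comp Nat.cast_injective).hasSum_iff (g := fun n : ℕ => -(n : ℤ))]
  · simp only [comp_def, onInvPowers_zpow_neg hq0 hq1]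
  · rintro j hj
    rw [onInvPowers, extend_apply', Pi.zero_apply, mul_zero]
    rintro ⟨n, hn⟩
    exact hj ⟨n, zpow_right_injective₀ hq0 hq1.ne hn⟩

lemma eulerPerturbation_one : eulerPerturbation q 1 = 1 := by
  simpa [eulerPerturbation, eulerCoeff] using
    onInvPowers_zpow_neg hq0 hq1 (fun n => eulerCoeff q n * q ^ n) 0

lemma hasSum_zpow_mul_eulerPerturbation (k : ℕ) :
    HasSum (fun j : ℤ => q ^ (j * (k + 1)) * eulerPerturbation q (q ^ j)) 0 := by
  rw [eulerPerturbation, hasSum_mul_onInvPowers_zpow_iff hq0 hq1,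
    ← eulerSeries_inv_pow_eq_zero hq0 hq1 k]
  convert (summable_eulerCoeff_mul_pow hq0.le hq1 (q ^ k)⁻¹).hasSum using 2 with n
  · have hpow : q ^ (-(n : ℤ) * (k + 1)) * q ^ n = ((q ^ k)⁻¹) ^ n := by
      rw [← zpow_natCast q n, ← zpow_add₀ hq0.ne', inv_pow, ← pow_mul, ← zpow_natCast, ← zpow_neg]
      congr 1
      push_cast
      ring
    linear_combination eulerCoeff q n * hpow
  · rfl

lemma add_mul_eulerPerturbation_nonneg {f : ℝ → ℝ} (hf : ∀ t > 0, 0 ≤ f t) {C : ℝ} (hC : 0 ≤ C)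
    (hheavy : ∀ n : ℕ, C * q ^ (n * (n + 1) / 2) ≤ f (q ^ (-(n : ℤ)))) {t : ℝ} (ht : 0 < t) :
    0 ≤ f t + C * exp (-(q / (1 - q) ^ 2)) * eulerPerturbation q t := by
  by_cases hmem : t ∈ Set.range fun n : ℕ => q ^ (-(n : ℤ))
  · obtain ⟨n, rfl⟩ := hmem
    rw [eulerPerturbation, onInvPowers_zpow_neg hq0 hq1]
    have hbound := mul_le_mul_of_nonneg_left (exp_mul_abs_eulerCoeff_mul_pow_le hq0.le hq1 n) hC
    have hneg := mul_le_mul_of_nonneg_left (neg_abs_le (eulerCoeff q n * q ^ n))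
      (mul_nonneg hC (exp_pos (-(q / (1 - q) ^ 2))).le)
    linarith [hheavy n]
  · rw [eulerPerturbation, onInvPowers, extend_apply' _ _ _ hmem, Pi.zero_apply, mul_zero,
      add_zero]
    exact hf t ht

end

end QMoment

open QMoment

/-- Theorem 1 (q-moment indeterminacy): a q-density with heavy tail
f(q^{-j}) ≥ C q^{j(j+1)/2} admits a distinct q-density with the same q-moments. -/
theorem q_moment_indeterminate (q : ℝ) (hq0 : 0 < q) (hq1 : q < 1)
    (f : ℝ → ℝ) (hf : ∀ t > 0, 0 ≤ f t)
    (hnorm : (1 - q) * ∑' j : ℤ, f (q ^ j) * q ^ j = 1)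
    (hmom : ∀ k : ℕ, Summable fun j : ℤ => q ^ (j * (k + 1)) * f (q ^ j))
    (C : ℝ) (hC : 0 < C)
    (hheavy : ∀ j : ℕ, C * q ^ (j * (j + 1) / 2) ≤ f (q ^ (-(j : ℤ)))) :
    ∃ g : ℝ → ℝ, (∀ t > 0, 0 ≤ g t) ∧
      (1 - q) * ∑' j : ℤ, g (q ^ j) * q ^ j = 1 ∧
      (∃ j : ℤ, g (q ^ j) ≠ f (q ^ j)) ∧
      ∀ k : ℕ, ∑' j : ℤ, q ^ (j * (k + 1)) * g (q ^ j) =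
        ∑' j : ℤ, q ^ (j * (k + 1)) * f (q ^ j) := by
  set ε := C * exp (-(q / (1 - q) ^ 2))
  have hε : ε ≠ 0 := (mul_pos hC (exp_pos _)).ne'
  set g : ℝ → ℝ := fun t => f t + ε * eulerPerturbation q t
  have hmoments : ∀ k : ℕ, ∑' j : ℤ, q ^ (j * (k + 1)) * g (q ^ j) =
      ∑' j : ℤ, q ^ (j * (k + 1)) * f (q ^ j) := fun k =>
    tsum_mul_add_mul_of_hasSum_zero (hmom k) (hasSum_zpow_mul_eulerPerturbation hq0 hq1 k) ε
  refine ⟨g, fun t => add_mul_eulerPerturbation_nonneg hq0 hq1 hf hC.le hheavy, ?_, ⟨0, ?_⟩,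
    hmoments⟩
  · have h0 := hmoments 0
    simp only [Nat.cast_zero, zero_add, mul_one] at h0
    simpa [mul_comm, h0] using hnorm
  · simp [g, eulerPerturbation_one hq0 hq1, hε]
end
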